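/- Fix τ ∈ ℍ and z ∈ ℂ with z ∉ ℤ+τℤ, 2z ∉ ℤ+τℤ. Let F₁(t) = [θ(t+z)θ'(0)/(θ(t)θ(z))] · [θ(t+2z)θ'(0)/(θ(t)θ(2z))] · [θ(t−2z)θ'(0)/(θ(t)θ(−2z))] · [θ(t−2z)θ(z)/(θ(t−z)θ(2z))]. Then F₁ has a simple pole at t = z with residue lim_{t→z} (t−z)·F₁(t) = −(θ'(0)/θ(z))² · θ(3z)θ(z)/θ(2z)². -/

import Mathlib

open Complex Topology Filter

/-!
Near `t = z` the only factor of `F₁` that vanishes is `θ(t - z)`, and it has a simple zero, so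
`(t - z) F₁(t)` is a function continuous at `z` times `(t - z) / θ(t - z) → 1 / θ'(0)`.
Evaluating at `t = z`, using that `θ` is odd, gives the residue.
The analytic input (θ entire, `θ'(0) ≠ 0`, `θ ≠ 0` off the lattice) comes from writing
`θ(t) = sin(πt) · G(t)`, where `G = thetaCofactor τ` is a product converging locally uniformly
in `t` whose factors vanish only on `ℤ + τ(ℤ ∖ {0})`.
-/

/-- `q = e^{2πiτ}`. -/
noncomputable def jq (τ : ℂ) : ℂ := Complex.exp (2 * Real.pi * I * τ)

/-- The Jacobi theta function
`θ(t,τ) = q^{1/8} · 2 sin(πt) · ∏_{n≥1}(1−qⁿ) · ∏_{n≥1}(1−qⁿe^{2πit})(1−qⁿe^{−2πit})`,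
where `q^{1/8} = e^{πiτ/4}`. -/
noncomputable def jTheta (t τ : ℂ) : ℂ :=
  Complex.exp (Real.pi * I * τ / 4) * (2 * Complex.sin (Real.pi * t)) *
    (∏' n : ℕ, (1 - jq τ ^ (n + 1))) *
    (∏' n : ℕ, (1 - jq τ ^ (n + 1) * Complex.exp (2 * Real.pi * I * t)) *
      (1 - jq τ ^ (n + 1) * Complex.exp (-(2 * Real.pi * I * t))))

/-- `θ(t)` with `τ` fixed. -/
noncomputable def th (τ t : ℂ) : ℂ := jTheta t τ

/-- `θ'(0)`, the derivative of `θ(·,τ)` at `t = 0`. -/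
noncomputable def thd (τ : ℂ) : ℂ := deriv (fun t => jTheta t τ) 0

/-- Membership in the lattice `ℤ + τℤ`. -/
def inLat (τ t : ℂ) : Prop := ∃ m n : ℤ, t = (m : ℂ) + (n : ℂ) * τ

/-- The function `F₁` arising in Case 1 of the proof of birational invariance:
`F₁(t) = [θ(t+z)θ'(0)/(θ(t)θ(z))]·[θ(t+2z)θ'(0)/(θ(t)θ(2z))]·
[θ(t−2z)θ'(0)/(θ(t)θ(−2z))]·[θ(t−2z)θ(z)/(θ(t−z)θ(2z))]`. -/
noncomputable def F₁ (τ z t : ℂ) : ℂ :=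
  (th τ (t + z) * thd τ / (th τ t * th τ z)) *
  (th τ (t + 2 * z) * thd τ / (th τ t * th τ (2 * z))) *
  (th τ (t - 2 * z) * thd τ / (th τ t * th τ (-(2 * z)))) *
  (th τ (t - 2 * z) * th τ z / (th τ (t - z) * th τ (2 * z)))

section TprodOneSubMul

variable {u : ℕ → ℂ}

theorem summable_norm_neg_mul (hu : Summable fun n => ‖u n‖) (w : ℂ) :
    Summable fun n => ‖-(u n * w)‖ := by
  simpa [norm_mul] using hu.mul_right ‖w‖

theorem multipliable_one_sub_mul (hu : Summable fun n => ‖u n‖) (w : ℂ) :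
    Multipliable fun n => 1 - u n * w := by
  simpa [sub_eq_add_neg] using multipliable_one_add_of_summable (summable_norm_neg_mul hu w)

theorem tprod_one_sub_mul_ne_zero (hu : Summable fun n => ‖u n‖) {w : ℂ}
    (hw : ∀ n, 1 - u n * w ≠ 0) : ∏' n, (1 - u n * w) ≠ 0 := by
  simp_rw [sub_eq_add_neg] at hw ⊢
  exact tprod_one_add_ne_zero_of_summable hw (summable_norm_neg_mul hu w)

theorem differentiable_tprod_one_sub_mul (hu : Summable fun n => ‖u n‖) :
    Differentiable ℂ fun w => ∏' n, (1 - u n * w) := by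
  intro w₀
  set R := ‖w₀‖ + 1
  have hprod : HasProdLocallyUniformlyOn (fun n w => 1 + -(u n * w))
      (fun w => ∏' n, (1 + -(u n * w))) (Metric.ball 0 R) := by
    refine (hu.mul_right R).hasProdLocallyUniformlyOn_one_add Metric.isOpen_ball
      (.of_forall fun n w hw => ?_) fun n => by fun_prop
    rw [norm_neg, norm_mul]
    exact mul_le_mul_of_nonneg_left (mem_ball_zero_iff.1 hw).le (norm_nonneg _)
  have hdiff := hprod.differentiableOn (.of_forall fun s => by
    simpa [Finset.prod_fn] using DifferentiableOn.finsetProd fun n _ => by fun_prop)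
    Metric.isOpen_ball
  simp_rw [← sub_eq_add_neg] at hdiff
  exact hdiff.differentiableAt (Metric.isOpen_ball.mem_nhds (by simp [R]))

end TprodOneSubMul

noncomputable def thetaCofactor (τ t : ℂ) : ℂ :=
  cexp (Real.pi * I * τ / 4) * 2 * (∏' n : ℕ, (1 - jq τ ^ (n + 1))) *
    (∏' n : ℕ, (1 - jq τ ^ (n + 1) * cexp (2 * Real.pi * I * t)) *
      (1 - jq τ ^ (n + 1) * cexp (-(2 * Real.pi * I * t))))

theorem th_eq_sin_mul_thetaCofactor (τ t : ℂ) :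
    th τ t = Complex.sin (Real.pi * t) * thetaCofactor τ t := by
  rw [th, jTheta, thetaCofactor]
  ring

section Theta

variable {τ : ℂ}

theorem norm_jq_lt_one (hτ : 0 < τ.im) : ‖jq τ‖ < 1 :=
  UpperHalfPlane.norm_exp_two_pi_I_lt_one ⟨τ, hτ⟩

theorem summable_norm_jq_pow_succ (hτ : 0 < τ.im) :
    Summable fun n : ℕ => ‖jq τ ^ (n + 1)‖ := by
  simpa [norm_pow, pow_succ] using
    (summable_geometric_of_lt_one (norm_nonneg _) (norm_jq_lt_one hτ)).mul_right ‖jq τ‖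

theorem one_sub_jq_pow_mul_exp_ne_zero {s : ℂ} (hs : ∀ m n : ℤ, n ≠ 0 → s ≠ m + n * τ)
    (k : ℕ) :
    1 - jq τ ^ (k + 1) * cexp (2 * Real.pi * I * s) ≠ 0 := by
  rw [sub_ne_zero, jq, ← Complex.exp_nat_mul, ← Complex.exp_add, ne_comm, Ne,
    Complex.exp_eq_one_iff]
  rintro ⟨m, hm⟩
  refine hs m (-(k + 1 : ℕ)) (by omega) ?_
  have hpi : 2 * (Real.pi : ℂ) * I ≠ 0 := by simp [Real.pi_ne_zero]
  apply mul_left_cancel₀ hpi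
  push_cast at hm ⊢
  linear_combination hm

theorem tprod_theta_eq_mul (hτ : 0 < τ.im) (t : ℂ) :
    ∏' n : ℕ, (1 - jq τ ^ (n + 1) * cexp (2 * Real.pi * I * t)) *
      (1 - jq τ ^ (n + 1) * cexp (-(2 * Real.pi * I * t))) =
    (∏' n : ℕ, (1 - jq τ ^ (n + 1) * cexp (2 * Real.pi * I * t))) *
      ∏' n : ℕ, (1 - jq τ ^ (n + 1) * cexp (-(2 * Real.pi * I * t))) :=
  (multipliable_one_sub_mul (summable_norm_jq_pow_succ hτ) _).tprod_mul
    (multipliable_one_sub_mul (summable_norm_jq_pow_succ hτ) _)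

theorem tprod_one_sub_jq_pow_ne_zero (hτ : 0 < τ.im) : ∏' n : ℕ, (1 - jq τ ^ (n + 1)) ≠ 0 := by
  simpa using tprod_one_sub_mul_ne_zero (summable_norm_jq_pow_succ hτ) (w := 1) fun k => by
    rw [mul_one, sub_ne_zero, ne_comm]
    refine ne_of_apply_ne norm (ne_of_lt ?_)
    simpa using pow_lt_one₀ (norm_nonneg _) (norm_jq_lt_one hτ) k.succ_ne_zero

theorem differentiable_thetaCofactor (hτ : 0 < τ.im) : Differentiable ℂ (thetaCofactor τ) := by
  have hP := differentiable_tprod_one_sub_mul (summable_norm_jq_pow_succ hτ)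
  have hexp : Differentiable ℂ fun t : ℂ =>
      ∏' n : ℕ, (1 - jq τ ^ (n + 1) * cexp (2 * Real.pi * I * t)) := hP.comp (by fun_prop)
  have hexp_neg : Differentiable ℂ fun t : ℂ =>
      ∏' n : ℕ, (1 - jq τ ^ (n + 1) * cexp (-(2 * Real.pi * I * t))) := hP.comp (by fun_prop)
  unfold thetaCofactor
  simp_rw [tprod_theta_eq_mul hτ]
  fun_prop

theorem thetaCofactor_ne_zero (hτ : 0 < τ.im) {t : ℂ}
    (ht : ∀ m n : ℤ, n ≠ 0 → t ≠ m + n * τ) : thetaCofactor τ t ≠ 0 := by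
  have hu := summable_norm_jq_pow_succ hτ
  have hexp := tprod_one_sub_mul_ne_zero hu (one_sub_jq_pow_mul_exp_ne_zero ht)
  have hexp_neg := tprod_one_sub_mul_ne_zero hu (one_sub_jq_pow_mul_exp_ne_zero (s := -t)
    fun m n hn h => ht (-m) (-n) (neg_ne_zero.2 hn) (by push_cast; linear_combination -h))
  simp only [mul_neg] at hexp_neg
  rw [thetaCofactor, tprod_theta_eq_mul hτ]
  exact mul_ne_zero (mul_ne_zero (by simp) (tprod_one_sub_jq_pow_ne_zero hτ))
    (mul_ne_zero hexp hexp_neg)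

theorem differentiable_th (hτ : 0 < τ.im) : Differentiable ℂ (th τ) := by
  have := differentiable_thetaCofactor hτ
  rw [funext (th_eq_sin_mul_thetaCofactor τ)]
  fun_prop

theorem th_neg (t : ℂ) : th τ (-t) = -th τ t := by
  simp only [th_eq_sin_mul_thetaCofactor, thetaCofactor, mul_neg, neg_neg, Complex.sin_neg]
  rw [tprod_congr fun n => mul_comm _ _]
  ring

theorem th_ne_zero (hτ : 0 < τ.im) {t : ℂ} (ht : ¬ inLat τ t) : th τ t ≠ 0 := by
  have hsin : Complex.sin (Real.pi * t) ≠ 0 := by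
    refine Complex.sin_ne_zero_iff.2 fun k hk => ht ⟨k, 0, ?_⟩
    have hpi : (Real.pi : ℂ) ≠ 0 := by simp [Real.pi_ne_zero]
    simpa using mul_left_cancel₀ hpi (hk.trans (mul_comm _ _))
  rw [th_eq_sin_mul_thetaCofactor]
  exact mul_ne_zero hsin (thetaCofactor_ne_zero hτ fun m n _ h => ht ⟨m, n, h⟩)

theorem thd_eq (hτ : 0 < τ.im) : thd τ = Real.pi * thetaCofactor τ 0 := by
  have hsin : HasDerivAt (fun t : ℂ => Complex.sin (Real.pi * t)) (Real.pi) 0 := by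
    simpa using ((hasDerivAt_id (0 : ℂ)).const_mul (Real.pi : ℂ)).csin
  have hth : HasDerivAt (th τ) (Real.pi * thetaCofactor τ 0) 0 := by
    rw [funext (th_eq_sin_mul_thetaCofactor τ)]
    simpa using hsin.fun_mul ((differentiable_thetaCofactor hτ) 0).hasDerivAt
  exact hth.deriv

theorem thd_ne_zero (hτ : 0 < τ.im) : thd τ ≠ 0 := by
  rw [thd_eq hτ]
  refine mul_ne_zero (by simp [Real.pi_ne_zero])
    (thetaCofactor_ne_zero hτ fun m n hn h => hn ?_)
  have him : (n : ℝ) * τ.im = 0 := by simpa using congrArg Complex.im h.symm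
  exact_mod_cast (mul_eq_zero.1 him).resolve_right hτ.ne'

end Theta

theorem tendsto_sub_div_comp_sub {𝕜 : Type*} [NontriviallyNormedField 𝕜] {f : 𝕜 → 𝕜} {f' : 𝕜}
    (hf : HasDerivAt f f' 0) (h0 : f 0 = 0) (hf' : f' ≠ 0) (z : 𝕜) :
    Tendsto (fun t => (t - z) / f (t - z)) (𝓝[≠] z) (𝓝 f'⁻¹) := by
  have hslope := hasDerivAt_iff_tendsto_slope.1
    (HasDerivAt.comp_sub_const z z (by simpa using hf))
  refine (hslope.inv₀ hf').congr fun t => ?_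
  simp [slope_def_field, h0]

/-- `F₁` has a simple pole at `t = z` with residue
`lim_{t→z} (t−z)F₁(t) = −(θ'(0)/θ(z))²·θ(3z)θ(z)/θ(2z)²`. -/
theorem F₁_residue_at_z (τ z : ℂ) (hτ : 0 < τ.im)
    (hz : ¬ inLat τ z) (h2z : ¬ inLat τ (2 * z)) :
    Filter.Tendsto (fun t : ℂ => (t - z) * F₁ τ z t) (𝓝[≠] z)
      (𝓝 (-((thd τ / th τ z) ^ 2 * (th τ (3 * z) * th τ z / (th τ (2 * z)) ^ 2)))) := by
  have hθ := differentiable_th hτ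
  have hθz := th_ne_zero hτ hz
  have hθ2z := th_ne_zero hτ h2z
  have hθm2z : th τ (-(2 * z)) ≠ 0 := by rw [th_neg]; exact neg_ne_zero.2 hθ2z
  have hθ'0 := thd_ne_zero hτ
  set g : ℂ → ℂ := fun t => (th τ (t + z) * thd τ / (th τ t * th τ z)) *
    (th τ (t + 2 * z) * thd τ / (th τ t * th τ (2 * z))) *
    (th τ (t - 2 * z) * thd τ / (th τ t * th τ (-(2 * z)))) *
    (th τ (t - 2 * z) * th τ z / th τ (2 * z)) with hg
  have hg_cont : ContinuousAt g z := by
    have hθ_cont := hθ.continuous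
    simp only [hg]
    fun_prop (disch := simp [hθz, hθ2z, hθm2z])
  have hθ' : HasDerivAt (th τ) (thd τ) 0 := (hθ 0).hasDerivAt
  have hpole := tendsto_sub_div_comp_sub hθ' (by simp [th_eq_sin_mul_thetaCofactor]) hθ'0 z
  have hlim := (hg_cont.tendsto.mono_left nhdsWithin_le_nhds).mul hpole
  convert hlim using 2 with t
  · simp only [hg, F₁]
    ring
  · simp only [hg, th_neg, show z + z = 2 * z by ring, show z + 2 * z = 3 * z by ring,
      show z - 2 * z = -z by ring]
    field_simp
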